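/- arXiv:2406.13955 — 2 statements merged into one kernel-verified Lean document; each statement's English description precedes it below -/
import Mathlib

section
/- For every n ≥ 5, the cycle C_n is not a 2-threshold graph. -/
/-!
Let `r` represent `G` with thresholds `θ₁ < θ₂`, let `w` minimise `r` and `x` maximise it. For a
neighbour `a` of `w` and a neighbour `b ≠ a` of `x`,
`θ₁ ≤ r w + r a ≤ r a + r b ≤ r x + r b < θ₂`, so `a` and `b` are adjacent. In `C_n` with `n ≥ 5`
such neighbours can always be chosen at cyclic distance at least two.
-/

namespace SimpleGraph

variable {V : Type*}

def IsTwoThreshold (G : SimpleGraph V) : Prop :=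
  ∃ θ₁ θ₂ : ℝ, θ₁ < θ₂ ∧ ∃ r : V → ℝ, ∀ u v, u ≠ v → (G.Adj u v ↔ θ₁ ≤ r u + r v ∧ r u + r v < θ₂)

theorem IsTwoThreshold.exists_forall_adj_of_adj [Finite V] [Nonempty V] {G : SimpleGraph V}
    (hG : G.IsTwoThreshold) :
    ∃ w x : V, ∀ a b, G.Adj w a → G.Adj x b → a ≠ b → G.Adj a b := by
  obtain ⟨θ₁, θ₂, -, r, hr⟩ := hG
  obtain ⟨w, hw⟩ := Finite.exists_min r
  obtain ⟨x, hx⟩ := Finite.exists_max r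
  refine ⟨w, x, fun a b hwa hxb hab => (hr a b hab).2 ⟨?_, ?_⟩⟩
  · calc θ₁ ≤ r w + r a := ((hr w a hwa.ne).1 hwa).1
      _ ≤ r a + r b := by linarith [hw b]
  · calc r a + r b ≤ r x + r b := by linarith [hx a]
      _ < θ₂ := ((hr x b hxb.ne).1 hxb).2

theorem cycleGraph_exists_adj_adj_ne_not_adj {n : ℕ} (hn : 5 ≤ n) (w x : Fin n) :
    ∃ a b, (cycleGraph n).Adj w a ∧ (cycleGraph n).Adj x b ∧ a ≠ b ∧ ¬(cycleGraph n).Adj a b := by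
  obtain ⟨m, rfl⟩ : ∃ m, n = m + 5 := ⟨n - 5, by omega⟩
  have h2 : (2 : Fin (m + 5)) ≠ 0 := by simp [Fin.ext_iff, Nat.mod_eq_of_lt]
  have h3 : (3 : Fin (m + 5)) ≠ 0 := by simp [Fin.ext_iff, Nat.mod_eq_of_lt]
  have h4 : (4 : Fin (m + 5)) ≠ 0 := by simp [Fin.ext_iff, Nat.mod_eq_of_lt]
  simp only [cycleGraph_adj]
  -- The witnesses make `b - a` equal to `-2`, `3`, `-3` and `x - w` respectively,
  -- none of which is `0` or `±1` when `n ≥ 5`.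
  by_cases hxw : x = w
  · exact ⟨w + 1, x - 1, by grind⟩
  by_cases hxw_succ : x = w + 1
  · exact ⟨w - 1, x + 1, by grind⟩
  by_cases hxw_pred : x = w - 1
  · exact ⟨w + 1, x - 1, by grind⟩
  · exact ⟨w + 1, x + 1, by grind⟩

end SimpleGraph

/-- For every n ≥ 5, Cₙ is not a 2-threshold graph. -/
theorem cn_not_two_threshold (n : ℕ) (hn : 5 ≤ n) :
    ¬ ∃ (θ₁ θ₂ : ℝ), θ₁ < θ₂ ∧ ∃ r : Fin n → ℝ, ∀ u v : Fin n, u ≠ v →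
      ((SimpleGraph.cycleGraph n).Adj u v ↔ θ₁ ≤ r u + r v ∧ r u + r v < θ₂) := by
  rintro (h : (SimpleGraph.cycleGraph n).IsTwoThreshold)
  have : Nonempty (Fin n) := ⟨⟨0, by omega⟩⟩
  obtain ⟨w, x, hwx⟩ := h.exists_forall_adj_of_adj
  obtain ⟨a, b, hwa, hxb, hab, hnab⟩ :=
    SimpleGraph.cycleGraph_exists_adj_adj_ne_not_adj hn w x
  exact hnab (hwx a b hwa hxb hab)
end

section
/- For every n ≥ 5, the threshold number of the cycle C_n equals 4: C_n is a 4-threshold graph but not a k-threshold graph for any k ≤ 3. -/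
open Classical in
/-- A graph is a k-threshold graph if there are thresholds θ₁ < ... < θ_k and
ranks r with uv an edge iff an odd number of thresholds are ≤ r u + r v. -/
def IsKThresholdGraph {V : Type*} (G : SimpleGraph V) (k : ℕ) : Prop :=
  ∃ θ : Fin k → ℝ, StrictMono θ ∧ ∃ r : V → ℝ, ∀ u v : V, u ≠ v →
    (G.Adj u v ↔ Odd (Finset.univ.filter (fun i => θ i ≤ r u + r v)).card)

section CnAux

open Finset SimpleGraph


lemma cycle_adj_val {n : ℕ} (hn : 5 ≤ n) {u v : Fin n} :
    (cycleGraph n).Adj u v ↔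
      (u.val + 1 = v.val ∨ v.val + 1 = u.val ∨ (u.val = 0 ∧ v.val + 1 = n) ∨
        (v.val = 0 ∧ u.val + 1 = n)) := by
  rw [SimpleGraph.cycleGraph_adj']
  have hu := u.isLt; have hv := v.isLt
  rw [Fin.sub_def, Fin.sub_def]
  have e1 : (n - v.val + u.val) % n = if n - v.val + u.val < n then n - v.val + u.val else n - v.val + u.val - n := by
    split_ifs with h
    · exact Nat.mod_eq_of_lt h
    · rw [Nat.mod_eq_sub_mod (le_of_not_gt h)]; exact Nat.mod_eq_of_lt (by omega)
  have e2 : (n - u.val + v.val) % n = if n - u.val + v.val < n then n - u.val + v.val else n - u.val + v.val - n := by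
    split_ifs with h
    · exact Nat.mod_eq_of_lt h
    · rw [Nat.mod_eq_sub_mod (le_of_not_gt h)]; exact Nat.mod_eq_of_lt (by omega)
  show (n - v.val + u.val) % n = 1 ∨ (n - u.val + v.val) % n = 1 ↔ _
  rw [e1, e2]
  split_ifs <;> omega

lemma no_triangle {n : ℕ} (hn : 5 ≤ n) {a b c : Fin n}
    (h1 : (cycleGraph n).Adj a b) (h2 : (cycleGraph n).Adj b c)
    (h3 : (cycleGraph n).Adj a c) : False := by
  rw [cycle_adj_val hn] at h1 h2 h3
  have := a.isLt; have := b.isLt; have := c.isLt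
  omega

lemma no_square {n : ℕ} (hn : 5 ≤ n) {a b c d : Fin n}
    (h1 : (cycleGraph n).Adj a b) (h2 : (cycleGraph n).Adj b c)
    (h3 : (cycleGraph n).Adj c d) (h4 : (cycleGraph n).Adj d a)
    (hac : a ≠ c) (hbd : b ≠ d) : False := by
  rw [cycle_adj_val hn] at h1 h2 h3 h4
  have hac' : a.val ≠ c.val := fun h => hac (Fin.ext h)
  have hbd' : b.val ≠ d.val := fun h => hbd (Fin.ext h)
  have := a.isLt; have := b.isLt; have := c.isLt; have := d.isLt
  omega

lemma degree_two {n : ℕ} (hn : 5 ≤ n) (v : Fin n) :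
    ∃ p q : Fin n, p ≠ q ∧ (cycleGraph n).Adj v p ∧ (cycleGraph n).Adj v q ∧
      ∀ w, (cycleGraph n).Adj v w → w = p ∨ w = q := by
  have hv := v.isLt
  rcases eq_or_ne (v.val + 1) n with h1 | h1
  · refine ⟨⟨0, by omega⟩, ⟨v.val - 1, by omega⟩, ?_, ?_, ?_, ?_⟩
    · simp only [ne_eq, Fin.ext_iff, Fin.val_mk]; omega
    · rw [cycle_adj_val hn]; simp only [Fin.val_mk, true_and, and_true, eq_self_iff_true, true_or, or_true] <;> omega
    · rw [cycle_adj_val hn]; simp only [Fin.val_mk, true_and, and_true, eq_self_iff_true, true_or, or_true] <;> omega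
    · intro w hw
      rw [cycle_adj_val hn] at hw
      have := w.isLt
      simp only [Fin.ext_iff, Fin.val_mk]
      omega
  · rcases eq_or_ne v.val 0 with h0 | h0
    · refine ⟨⟨1, by omega⟩, ⟨n - 1, by omega⟩, ?_, ?_, ?_, ?_⟩
      · simp only [ne_eq, Fin.ext_iff, Fin.val_mk]; omega
      · rw [cycle_adj_val hn]; simp only [Fin.val_mk, true_and, and_true, eq_self_iff_true, true_or, or_true] <;> omega
      · rw [cycle_adj_val hn]; simp only [Fin.val_mk, true_and, and_true, eq_self_iff_true, true_or, or_true] <;> omega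
      · intro w hw
        rw [cycle_adj_val hn] at hw
        have := w.isLt
        simp only [Fin.ext_iff, Fin.val_mk]
        omega
    · refine ⟨⟨v.val + 1, by omega⟩, ⟨v.val - 1, by omega⟩, ?_, ?_, ?_, ?_⟩
      · simp only [ne_eq, Fin.ext_iff, Fin.val_mk]; omega
      · rw [cycle_adj_val hn]; simp only [Fin.val_mk, true_and, and_true, eq_self_iff_true, true_or, or_true] <;> omega
      · rw [cycle_adj_val hn]; simp only [Fin.val_mk, true_and, and_true, eq_self_iff_true, true_or, or_true] <;> omega
      · intro w hw
        rw [cycle_adj_val hn] at hw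
        have := w.isLt
        simp only [Fin.ext_iff, Fin.val_mk]
        omega

open Classical in
lemma odd3 (θ : Fin 3 → ℝ) (hθ : StrictMono θ) (s : ℝ) :
    Odd ((Finset.univ.filter (fun i => θ i ≤ s)).card) ↔
      ((θ 0 ≤ s ∧ s < θ 1) ∨ θ 2 ≤ s) := by
  have h01 : θ 0 < θ 1 := hθ (by decide)
  have h12 : θ 1 < θ 2 := hθ (by decide)
  rw [Finset.card_filter, Fin.sum_univ_three]
  rcases lt_or_ge s (θ 0) with c0 | c0
  · rw [if_neg (by linarith), if_neg (by linarith), if_neg (by linarith)]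
    refine iff_of_false (by decide) ?_
    rintro (⟨a, b⟩ | c) <;> linarith
  · rcases lt_or_ge s (θ 1) with c1 | c1
    · rw [if_pos c0, if_neg (by linarith), if_neg (by linarith)]
      exact iff_of_true (by decide) (Or.inl ⟨c0, c1⟩)
    · rcases lt_or_ge s (θ 2) with c2 | c2
      · rw [if_pos c0, if_pos c1, if_neg (by linarith)]
        refine iff_of_false (by decide) ?_
        rintro (⟨a, b⟩ | c) <;> linarith
      · rw [if_pos c0, if_pos c1, if_pos c2]
        exact iff_of_true (by decide) (Or.inr c2)

open Classical in
lemma odd4 (θ : Fin 4 → ℤ) (s : ℤ) (h1 : θ 0 < θ 1) (h2 : θ 1 < θ 2) (h3 : θ 2 < θ 3) :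
    Odd ((Finset.univ.filter (fun i : Fin 4 => (θ i : ℝ) ≤ ((s : ℤ) : ℝ))).card) ↔
      ((θ 0 ≤ s ∧ s < θ 1) ∨ (θ 2 ≤ s ∧ s < θ 3)) := by
  rw [Finset.card_filter, Fin.sum_univ_four]
  simp only [Int.cast_le]
  rcases lt_or_ge s (θ 0) with c0 | c0
  · rw [if_neg (by omega), if_neg (by omega), if_neg (by omega), if_neg (by omega)]
    exact iff_of_false (by decide) (by omega)
  · rcases lt_or_ge s (θ 1) with c1 | c1
    · rw [if_pos c0, if_neg (by omega), if_neg (by omega), if_neg (by omega)]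
      exact iff_of_true (by decide) (by omega)
    · rcases lt_or_ge s (θ 2) with c2 | c2
      · rw [if_pos c0, if_pos c1, if_neg (by omega), if_neg (by omega)]
        exact iff_of_false (by decide) (by omega)
      · rcases lt_or_ge s (θ 3) with c3 | c3
        · rw [if_pos c0, if_pos c1, if_pos c2, if_neg (by omega)]
          exact iff_of_true (by decide) (by omega)
        · rw [if_pos c0, if_pos c1, if_pos c2, if_pos c3]
          exact iff_of_false (by decide) (by omega)

open Classical in
lemma pad {V : Type*} [Fintype V] (G : SimpleGraph V) (k : ℕ)
    (h : IsKThresholdGraph G k) : IsKThresholdGraph G (k + 1) := by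
  obtain ⟨θ, hθ, r, hr⟩ := h
  set T : Finset ℝ :=
    insert 0 ((Finset.univ.image θ) ∪ ((Finset.univ ×ˢ Finset.univ).image
      (fun p : V × V => r p.1 + r p.2))) with hT
  set B : ℝ := T.max' (insert_nonempty _ _) + 1 with hB
  have hBθ : ∀ i, θ i < B := by
    intro i
    have : θ i ∈ T := by
      rw [hT]; exact mem_insert_of_mem (mem_union_left _ (mem_image_of_mem θ (mem_univ i)))
    have := le_max' T _ this
    linarith [this]
  have hBr : ∀ u v : V, r u + r v < B := by
    intro u v
    have : r u + r v ∈ T := by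
      rw [hT]
      exact mem_insert_of_mem (mem_union_right _
        (mem_image.mpr ⟨(u, v), mem_product.mpr ⟨mem_univ u, mem_univ v⟩, rfl⟩))
    have := le_max' T _ this
    linarith [this]
  refine ⟨fun i => if h : i.val < k then θ ⟨i.val, h⟩ else B, ?_, r, ?_⟩
  · intro i j hij
    dsimp only
    rcases Nat.lt_or_ge i.val k with hi | hi
    · rcases Nat.lt_or_ge j.val k with hj | hj
      · rw [dif_pos hi, dif_pos hj]
        exact hθ (show (⟨i.val, hi⟩ : Fin k) < ⟨j.val, hj⟩ from hij)
      · rw [dif_pos hi, dif_neg (not_lt.mpr hj)]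
        exact hBθ _
    · exfalso
      have : j.val < k + 1 := j.isLt
      have : i.val < j.val := hij
      omega
  · intro u v huv
    rw [hr u v huv]
    dsimp only
    suffices hcards : (Finset.univ.filter (fun i : Fin k => θ i ≤ r u + r v)).card =
        (Finset.univ.filter (fun i : Fin (k+1) =>
          (if h : i.val < k then θ ⟨i.val, h⟩ else B) ≤ r u + r v)).card by rw [hcards]
    rw [Finset.card_filter, Finset.card_filter, Fin.sum_univ_castSucc]
    have hlast : ¬ ((if h : (Fin.last k).val < k then θ ⟨(Fin.last k).val, h⟩ else B) ≤ r u + r v) := by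
      rw [dif_neg (by simp)]
      exact not_le.mpr (hBr u v)
    rw [if_neg hlast, add_zero]
    refine (Finset.sum_congr rfl ?_)
    intro i _
    have hi : (Fin.castSucc i).val < k := i.isLt
    rw [dif_pos hi]
    simp only [Fin.coe_castSucc, Fin.eta]

lemma not_three {n : ℕ} (hn : 5 ≤ n) : ¬ IsKThresholdGraph (SimpleGraph.cycleGraph n) 3 := by
  rintro ⟨θ, hθ, r, hr⟩
  set G := SimpleGraph.cycleGraph n with hG
  have h01 : θ 0 < θ 1 := hθ (by decide)
  have h12 : θ 1 < θ 2 := hθ (by decide)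
  have hE : ∀ u v : Fin n, u ≠ v →
      (G.Adj u v ↔ ((θ 0 ≤ r u + r v ∧ r u + r v < θ 1) ∨ θ 2 ≤ r u + r v)) := by
    intro u v huv
    rw [hr u v huv, odd3 θ hθ]
  -- ranks are injective
  have hinj : Function.Injective r := by
    intro u v huv'
    by_contra huv
    have htrans : ∀ w, w ≠ u → w ≠ v → (G.Adj u w → G.Adj v w) := by
      intro w hwu hwv h
      rw [hE u w (Ne.symm hwu)] at h
      rw [hE v w (Ne.symm hwv), ← huv']
      exact h
    by_cases hadj : G.Adj u v
    · obtain ⟨p, q, hpq, hup, huq, hall⟩ := degree_two hn u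
      rcases hall v hadj with h | h
      · subst h
        have hq_ne_v : q ≠ v := Ne.symm hpq
        have hq_ne_u : q ≠ u := (huq.ne).symm
        exact no_triangle hn hadj (htrans q hq_ne_u hq_ne_v huq) huq
      · subst h
        have hp_ne_v : p ≠ v := hpq
        have hp_ne_u : p ≠ u := (hup.ne).symm
        exact no_triangle hn hadj (htrans p hp_ne_u hp_ne_v hup) hup
    · obtain ⟨p, q, hpq, hup, huq, hall⟩ := degree_two hn u
      have hpu : p ≠ u := (hup.ne).symm
      have hpv : p ≠ v := fun h => hadj (h ▸ hup)
      have hqu : q ≠ u := (huq.ne).symm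
      have hqv : q ≠ v := fun h => hadj (h ▸ huq)
      exact no_square hn hup (htrans p hpu hpv hup).symm (htrans q hqu hqv huq)
        huq.symm huv hpq
  -- max and min vertices
  obtain ⟨a, -, ha'⟩ := Finset.exists_max_image (Finset.univ : Finset (Fin n)) r
    ⟨⟨0, by omega⟩, Finset.mem_univ _⟩
  obtain ⟨b, -, hb'⟩ := Finset.exists_min_image (Finset.univ : Finset (Fin n)) r
    ⟨⟨0, by omega⟩, Finset.mem_univ _⟩
  have ha : ∀ w, r w ≤ r a := fun w => ha' w (Finset.mem_univ w)
  have hb : ∀ w, r b ≤ r w := fun w => hb' w (Finset.mem_univ w)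
  have hab_ne : a ≠ b := by
    intro h
    have h2 : r ⟨0, by omega⟩ = r ⟨1, by omega⟩ :=
      le_antisymm (by rw [h] at ha; linarith [ha ⟨0, by omega⟩, hb ⟨1, by omega⟩])
        (by rw [h] at ha; linarith [ha ⟨1, by omega⟩, hb ⟨0, by omega⟩])
    have := hinj h2
    rw [Fin.ext_iff] at this
    simp at this
  rcases le_or_gt (θ 2) (r a + r b) with hc2 | hc2
  · -- Case I : a adjacent to everyone
    have halladj : ∀ v, v ≠ a → G.Adj a v := by
      intro v hv
      exact (hE a v (Ne.symm hv)).mpr (Or.inr (by linarith [hb v]))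
    obtain ⟨p, q, hpq, hap, haq, hall⟩ := degree_two hn a
    have hsub : (Finset.univ.erase a) ⊆ {p, q} := by
      intro w hw
      have hwa : w ≠ a := (Finset.mem_erase.mp hw).1
      rcases hall w (halladj w hwa) with h | h <;> simp [h]
    have hc := Finset.card_le_card hsub
    rw [Finset.card_erase_of_mem (Finset.mem_univ a), Finset.card_univ, Fintype.card_fin] at hc
    have h2 : ({p, q} : Finset (Fin n)).card ≤ 2 := by
      apply le_trans (Finset.card_insert_le _ _)
      simp
    omega
  rcases lt_or_ge (r a + r b) (θ 0) with hc0 | hc0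
  · -- Case IV : b adjacent to nobody
    obtain ⟨p, q, hpq, hbp, hbq, hall⟩ := degree_two hn b
    have : ¬ G.Adj b p := by
      rw [hE b p hbp.ne]
      rintro (⟨h1, h2⟩ | h) <;> linarith [ha p]
    exact this hbp
  rcases lt_or_ge (r a + r b) (θ 1) with hc1 | hc1
  · -- Case III : θ 0 ≤ r a + r b < θ 1
    have hab : G.Adj a b := (hE a b hab_ne).mpr (Or.inl ⟨hc0, hc1⟩)
    obtain ⟨p, q, hpq, hbp, hbq, hall⟩ := degree_two hn b
    obtain ⟨x, hx_ne_a, hbx, hbuniq⟩ : ∃ x, x ≠ a ∧ G.Adj b x ∧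
        ∀ w, G.Adj b w → w = a ∨ w = x := by
      rcases hall a hab.symm with h | h
      · subst h
        exact ⟨q, Ne.symm hpq, hbq, fun w hw => hall w hw⟩
      · subst h
        exact ⟨p, hpq, hbp, fun w hw => (hall w hw).symm⟩
    have hx_ne_b : x ≠ b := (hbx.ne).symm
    have hbx0 : θ 0 ≤ r b + r x := by
      rcases (hE b x hbx.ne).mp hbx with ⟨h1, -⟩ | h2
      · exact h1
      · exfalso; linarith [ha x]
    have hsmall : ∀ v, v ≠ a → v ≠ b → v ≠ x → r b + r v < θ 0 := by
      intro v hva hvb hvx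
      have hnadj : ¬ G.Adj b v := by
        intro h
        rcases hbuniq v h with h' | h'
        · exact hva h'
        · exact hvx h'
      rw [hE b v (Ne.symm hvb)] at hnadj
      push_neg at hnadj
      by_contra hcon
      push_neg at hcon
      linarith [ha v, hnadj.1 hcon]
    have hnax : ¬ G.Adj a x := fun h => no_triangle hn hab hbx h
    have hax1 : θ 1 ≤ r a + r x ∧ r a + r x < θ 2 := by
      rw [hE a x (Ne.symm hx_ne_a)] at hnax
      push_neg at hnax
      exact ⟨hnax.1 (by linarith [hb x]), hnax.2⟩
    obtain ⟨p', q', hpq', hap', haq', hall'⟩ := degree_two hn a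
    obtain ⟨c, hc_ne_b, hac⟩ : ∃ c, c ≠ b ∧ G.Adj a c := by
      rcases hall' b hab with h | h
      · subst h
        exact ⟨q', Ne.symm hpq', haq'⟩
      · subst h
        exact ⟨p', hpq', hap'⟩
    have hca : c ≠ a := (hac.ne).symm
    have hcx : c ≠ x := fun h => hnax (h ▸ hac)
    have hcsmall : r b + r c < θ 0 := hsmall c hca hc_ne_b hcx
    have hrcx : r c < r x := by linarith
    have hac0 : θ 0 ≤ r a + r c ∧ r a + r c < θ 1 := by
      rcases (hE a c (Ne.symm hca)).mp hac with h | h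
      · exact h
      · exfalso; linarith [hax1.2]
    have hxc : G.Adj x c := by
      apply (hE x c (Ne.symm hcx)).mpr
      left
      constructor
      · linarith [hb c]
      · linarith [ha x, hac0.2]
    exact no_square hn hab hbx hxc hac.symm (Ne.symm hx_ne_a) (Ne.symm hc_ne_b)
  · -- Case II : θ 1 ≤ r a + r b < θ 2
    have hnab : ¬ G.Adj a b := by
      rw [hE a b hab_ne]
      rintro (⟨h1, h2⟩ | h) <;> linarith
    have hchar : ∀ v, v ≠ a → (G.Adj a v ↔ θ 2 ≤ r a + r v) := by
      intro v hva
      rw [hE a v (Ne.symm hva)]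
      constructor
      · rintro (⟨h1, h2⟩ | h)
        · exfalso; linarith [hb v]
        · exact h
      · exact Or.inr
    obtain ⟨x0, y0, hxy0, hax0, hay0, hall0⟩ := degree_two hn a
    have key : ∀ x y : Fin n, G.Adj a x → G.Adj a y → x ≠ y →
        (∀ w, G.Adj a w → w = x ∨ w = y) → r y ≤ r x → False := by
      intro x y hax hay hxy hall hyx
      have hxa : x ≠ a := (hax.ne).symm
      have hya : y ≠ a := (hay.ne).symm
      have hx2 : θ 2 ≤ r a + r x := (hchar x hxa).mp hax
      have hy2 : θ 2 ≤ r a + r y := (hchar y hya).mp hay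
      have hout : ∀ v, v ≠ a → v ≠ x → v ≠ y → r a + r v < θ 2 := by
        intro v hva hvx hvy
        by_contra hcon
        push_neg at hcon
        rcases hall v ((hchar v hva).mpr hcon) with h | h
        · exact hvx h
        · exact hvy h
      have hex : ∃ v : Fin n, v ≠ a ∧ v ≠ x ∧ v ≠ y := by
        by_contra hcon
        push_neg at hcon
        have hsub : (Finset.univ : Finset (Fin n)) ⊆ {a, x, y} := by
          intro w _
          simp only [Finset.mem_insert, Finset.mem_singleton]
          by_contra hw
          push_neg at hw
          exact hw.2.2 (hcon w hw.1 hw.2.1)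
        have hcard := Finset.card_le_card hsub
        have h3 : ({a, x, y} : Finset (Fin n)).card ≤ 3 := by
          apply le_trans (Finset.card_insert_le _ _)
          have := Finset.card_insert_le x ({y} : Finset (Fin n))
          simp only [Finset.card_singleton] at this
          omega
        rw [Finset.card_univ, Fintype.card_fin] at hcard
        omega
      have hbx : b ≠ x := by
        rintro rfl
        obtain ⟨v, hva, hvx, hvy⟩ := hex
        linarith [hout v hva hvx hvy, hb v, hx2]
      have hby : b ≠ y := by
        rintro rfl
        obtain ⟨v, hva, hvx, hvy⟩ := hex
        linarith [hout v hva hvx hvy, hb v, hy2]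
      have hbnd1 : ∀ v, v ≠ a → r v ≤ r x := by
        intro v hva
        by_cases h1 : v = x
        · rw [h1]
        · by_cases h2 : v = y
          · rw [h2]; exact hyx
          · linarith [hout v hva h1 h2, hx2]
      have hbnd2 : ∀ v, v ≠ a → v ≠ x → r v ≤ r y := by
        intro v hva hvx
        by_cases h2 : v = y
        · rw [h2]
        · linarith [hout v hva hvx h2, hy2]
      have hpure : ∀ u v : Fin n, u ≠ a → v ≠ a → u ≠ v → r u + r v < θ 2 := by
        have hxy2 : r x + r y < θ 2 := by
          by_contra hcon
          push_neg at hcon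
          exact no_triangle hn hax ((hE x y hxy).mpr (Or.inr hcon)) hay
        intro u v hua hva huv
        by_cases hux : u = x
        · subst hux
          have : r v ≤ r y := hbnd2 v hva (Ne.symm huv)
          linarith
        · linarith [hbnd2 u hua hux, hbnd1 v hva]
      have hEP : ∀ u v : Fin n, u ≠ a → v ≠ a → u ≠ v →
          (G.Adj u v ↔ (θ 0 ≤ r u + r v ∧ r u + r v < θ 1)) := by
        intro u v hua hva huv
        rw [hE u v huv]
        constructor
        · rintro (h | h)
          · exact h
          · exfalso; linarith [hpure u v hua hva huv]
        · exact Or.inl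
      have hba : b ≠ a := Ne.symm hab_ne
      rcases lt_or_ge (r x + r b) (θ 0) with hsb | hsb
      · obtain ⟨p, q, hpq, hbp, hbq, hallb⟩ := degree_two hn b
        have hpa : p ≠ a := by
          rintro rfl
          exact hnab hbp.symm
        have hpb : b ≠ p := hbp.ne
        have hbds := (hEP b p hba hpa hpb).mp hbp
        linarith [hbds.1, hbnd1 p hpa]
      · rcases le_or_gt (θ 1) (r x + r b) with hsb1 | hsb1
        · obtain ⟨p, q, hpq, hxp, hxq, hallx⟩ := degree_two hn x
          have hone : ∀ w, G.Adj x w → w = a := by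
            intro w hw
            by_contra hwa
            have hbds := (hEP x w hxa hwa hw.ne).mp hw
            linarith [hbds.2, hb w]
          exact hpq ((hone p hxp).trans (hone q hxq).symm)
        · have hxb_adj : G.Adj x b := (hEP x b hxa hba (Ne.symm hbx)).mpr ⟨hsb, hsb1⟩
          obtain ⟨p, q, hpq, hbp, hbq, hallb⟩ := degree_two hn b
          obtain ⟨e, he_ne_x, hbe⟩ : ∃ e, e ≠ x ∧ G.Adj b e := by
            rcases hallb x hxb_adj.symm with h | h
            · subst h
              exact ⟨q, Ne.symm hpq, hbq⟩
            · subst h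
              exact ⟨p, hpq, hbp⟩
          have hea : e ≠ a := by
            rintro rfl
            exact hnab hbe.symm
          have heb : b ≠ e := hbe.ne
          have hbe_bounds := (hEP b e hba hea heb).mp hbe
          have hby_adj : G.Adj b y := by
            by_cases hey : e = y
            · exact hey ▸ hbe
            · apply (hEP b y hba hya hby).mpr
              have hey' : r e ≤ r y := hbnd2 e hea he_ne_x
              exact ⟨by linarith [hbe_bounds.1], by linarith [hsb1, hyx]⟩
          exact no_square hn hax hxb_adj hby_adj hay.symm hab_ne hxy
    rcases le_total (r y0) (r x0) with h | h
    · exact key x0 y0 hax0 hay0 hxy0 hall0 h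
    · exact key y0 x0 hay0 hax0 (Ne.symm hxy0) (fun w hw => (hall0 w hw).symm) h

lemma upper {n : ℕ} (hn : 5 ≤ n) : IsKThresholdGraph (cycleGraph n) 4 := by
  rcases Nat.mod_two_eq_zero_or_one n with hpar | hpar
  · -- n even, n ≥ 6
    set θ' : Fin 4 → ℤ := ![1 - (n : ℤ), 3 - (n : ℤ), -1, 3] with hθ'
    set r' : Fin n → ℤ :=
      fun v => if v.val % 2 = 0 then (n : ℤ) + v.val else -((n : ℤ) + v.val - 1) with hr'
    have e0 : θ' 0 = 1 - (n : ℤ) := rfl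
    have e1 : θ' 1 = 3 - (n : ℤ) := rfl
    have e2 : θ' 2 = -1 := rfl
    have e3 : θ' 3 = 3 := rfl
    have h1 : θ' 0 < θ' 1 := by rw [e0, e1]; omega
    have h2 : θ' 1 < θ' 2 := by rw [e1, e2]; omega
    have h3 : θ' 2 < θ' 3 := by rw [e2, e3]; omega
    refine ⟨fun i => ((θ' i : ℤ) : ℝ), ?_, fun v => ((r' v : ℤ) : ℝ), ?_⟩
    · intro i j hij
      have hij' : i.val < j.val := hij
      have hi := i.isLt; have hj := j.isLt
      rw [Int.cast_lt]
      interval_cases hiv : i.val <;> interval_cases hjv : j.val <;>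
        first
          | omega
          | (rw [show i = 0 from Fin.ext (by omega), show j = 1 from Fin.ext (by omega)]; exact h1)
          | (rw [show i = 0 from Fin.ext (by omega), show j = 2 from Fin.ext (by omega), e0, e2]; omega)
          | (rw [show i = 0 from Fin.ext (by omega), show j = 3 from Fin.ext (by omega), e0, e3]; omega)
          | (rw [show i = 1 from Fin.ext (by omega), show j = 2 from Fin.ext (by omega)]; exact h2)
          | (rw [show i = 1 from Fin.ext (by omega), show j = 3 from Fin.ext (by omega), e1, e3]; omega)
          | (rw [show i = 2 from Fin.ext (by omega), show j = 3 from Fin.ext (by omega)]; exact h3)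
    · intro u v huv
      have hne : u.val ≠ v.val := fun h => huv (Fin.ext h)
      have hu' := u.isLt; have hv' := v.isLt
      rw [cycle_adj_val hn]
      simp only [← Int.cast_add]
      rw [odd4 θ' (r' u + r' v) h1 h2 h3, e0, e1, e2, e3]
      rcases Nat.mod_two_eq_zero_or_one u.val with hu | hu <;>
        rcases Nat.mod_two_eq_zero_or_one v.val with hv | hv <;>
          simp only [hr', hu, hv] <;> norm_num <;> omega
  · -- n odd
    set θ' : Fin 4 → ℤ := ![-12, 4, 4 * (n : ℤ) - 7, 4 * (n : ℤ) - 5] with hθ'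
    set r' : Fin n → ℤ := fun v =>
      if v.val + 1 = n then -2
      else if v.val % 2 = 0 then 4 * (n : ℤ) - 4 - 4 * (v.val : ℤ)
      else 4 * (v.val : ℤ) - 4 * (n : ℤ) with hr'
    have e0 : θ' 0 = -12 := rfl
    have e1 : θ' 1 = 4 := rfl
    have e2 : θ' 2 = 4 * (n : ℤ) - 7 := rfl
    have e3 : θ' 3 = 4 * (n : ℤ) - 5 := rfl
    have h1 : θ' 0 < θ' 1 := by rw [e0, e1]; omega
    have h2 : θ' 1 < θ' 2 := by rw [e1, e2]; omega
    have h3 : θ' 2 < θ' 3 := by rw [e2, e3]; omega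
    refine ⟨fun i => ((θ' i : ℤ) : ℝ), ?_, fun v => ((r' v : ℤ) : ℝ), ?_⟩
    · intro i j hij
      have hij' : i.val < j.val := hij
      have hi := i.isLt; have hj := j.isLt
      rw [Int.cast_lt]
      interval_cases hiv : i.val <;> interval_cases hjv : j.val <;>
        first
          | omega
          | (rw [show i = 0 from Fin.ext (by omega), show j = 1 from Fin.ext (by omega)]; exact h1)
          | (rw [show i = 0 from Fin.ext (by omega), show j = 2 from Fin.ext (by omega), e0, e2]; omega)
          | (rw [show i = 0 from Fin.ext (by omega), show j = 3 from Fin.ext (by omega), e0, e3]; omega)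
          | (rw [show i = 1 from Fin.ext (by omega), show j = 2 from Fin.ext (by omega)]; exact h2)
          | (rw [show i = 1 from Fin.ext (by omega), show j = 3 from Fin.ext (by omega), e1, e3]; omega)
          | (rw [show i = 2 from Fin.ext (by omega), show j = 3 from Fin.ext (by omega)]; exact h3)
    · intro u v huv
      have hne : u.val ≠ v.val := fun h => huv (Fin.ext h)
      have hu' := u.isLt; have hv' := v.isLt
      rw [cycle_adj_val hn]
      simp only [← Int.cast_add]
      rw [odd4 θ' (r' u + r' v) h1 h2 h3, e0, e1, e2, e3]
      rcases eq_or_ne (u.val + 1) n with hu1 | hu1 <;>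
        rcases eq_or_ne (v.val + 1) n with hv1 | hv1 <;>
          rcases Nat.mod_two_eq_zero_or_one u.val with hu | hu <;>
            rcases Nat.mod_two_eq_zero_or_one v.val with hv | hv <;>
              simp only [hr', hu1, hv1, hu, hv] <;> norm_num <;> omega

end CnAux

/-- For every n ≥ 5, the threshold number of Cₙ equals 4. -/
theorem cn_threshold_number_four (n : ℕ) (hn : 5 ≤ n) :
    IsKThresholdGraph (SimpleGraph.cycleGraph n) 4 ∧
    ∀ k ≤ 3, ¬ IsKThresholdGraph (SimpleGraph.cycleGraph n) k := by
  constructor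
  · exact upper hn
  · intro k hk h
    have h3 : IsKThresholdGraph (SimpleGraph.cycleGraph n) 3 := by
      interval_cases k
      · exact pad _ _ (pad _ _ (pad _ _ h))
      · exact pad _ _ (pad _ _ h)
      · exact pad _ _ h
      · exact h
    exact not_three hn h3
end
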